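/- Let (x_i, y_i) ∈ ℝ² × ℝ², i = 1,…,m, be given. The following are equivalent: (1) there exist NON-COINCIDENT cameras P₁, P₂ and points w_i ∈ ℝ⁴∖{0} forming a reconstruction of {(x_i,y_i)}; (2) there exist non-coincident finite cameras P₁, P₂ and points w_i ∈ ℝ⁴∖{0} forming a reconstruction; (3) there exist non-coincident finite cameras P₁, P₂ and points w_i ∈ ℝ³ such that (P₁,P₂,{ŵ_i}) is a reconstruction; (4) there exist a finite camera P₂ non-coincident with P₁ = (I 0) and points w_i ∈ ℝ³ such that (P₁,P₂,{ŵ_i}) is a reconstruction. -/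

import Mathlib

open Matrix

noncomputable section

/-- For `u ∈ ℝⁿ`, `hat u = (u, 1)ᵀ ∈ ℝⁿ⁺¹`. -/
def hat {n : ℕ} (u : Fin n → ℝ) : Fin (n + 1) → ℝ := Fin.snoc u 1

/-- The 3×4 matrix `(A b)` with left 3×3 block `A` and last column `b`. -/
def cam (A : Matrix (Fin 3) (Fin 3) ℝ) (b : Fin 3 → ℝ) : Matrix (Fin 3) (Fin 4) ℝ :=
  Matrix.of fun i => Fin.snoc (A i) (b i)

/-- The left 3×3 block of a 3×4 matrix. -/
def leftBlock (P : Matrix (Fin 3) (Fin 4) ℝ) : Matrix (Fin 3) (Fin 3) ℝ :=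
  P.submatrix id Fin.castSucc

/-- A (projective) camera is a real 3×4 matrix of rank 3. -/
def IsCamera (P : Matrix (Fin 3) (Fin 4) ℝ) : Prop := P.rank = 3

/-- A finite camera: the left 3×3 block is nonsingular. -/
def IsFiniteCamera (P : Matrix (Fin 3) (Fin 4) ℝ) : Prop := IsUnit (leftBlock P).det

/-- Two cameras are coincident if their camera centers agree up to a nonzero scale;
for rank-3 cameras the center is the (one-dimensional) kernel, so this says the two
cameras share a common nonzero kernel vector. -/
def Coincident (P Q : Matrix (Fin 3) (Fin 4) ℝ) : Prop :=
  ∃ c : Fin 4 → ℝ, c ≠ 0 ∧ P.mulVec c = 0 ∧ Q.mulVec c = 0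

/-- `u` is a nonzero scalar multiple of `v`. -/
def SimEq {n : ℕ} (u v : Fin n → ℝ) : Prop := ∃ c : ℝ, c ≠ 0 ∧ u = c • v

/-- The skew-symmetric matrix `[v]ₓ` with `[v]ₓ w = v × w`. -/
def skew (v : Fin 3 → ℝ) : Matrix (Fin 3) (Fin 3) ℝ :=
  !![0, -v 2, v 1; v 2, 0, -v 0; -v 1, v 0, 0]

/-- `(x, y)` is `(A, b)`-irregular. -/
def Irregular (A : Matrix (Fin 3) (Fin 3) ℝ) (b : Fin 3 → ℝ) (x y : Fin 2 → ℝ) : Prop :=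
  ((skew b * A).mulVec (hat x) = 0 ∧ Matrix.vecMul (hat y) (skew b) ≠ 0) ∨
  ((skew b * A).mulVec (hat x) ≠ 0 ∧ Matrix.vecMul (hat y) (skew b) = 0)


/-!
A projective change of coordinates `T ∈ GL₄(ℝ)` turns a reconstruction `(P₁, P₂, wᵢ)` into
`(P₁ T⁻¹, P₂ T⁻¹, T wᵢ)` and preserves (non-)coincidence; `P T⁻¹` is finite exactly when the
centre of `P` is not sent to the plane at infinity. Since `ℝ` is infinite, some linear form `f`
is nonzero on both camera centres and on all the `wᵢ`; taking `f` as the last row of `T` keeps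
all of them off the plane at infinity, so both cameras become finite and every `T wᵢ` rescales
to some `ŵᵢ`. When `P₁` is already finite, the choice `T = (P₁; e₄)` turns `P₁` into `(I 0)`.
-/

section SnocRow

variable {α ι : Type*} {n : ℕ}

def snocRow (R : Matrix (Fin n) ι α) (f : ι → α) : Matrix (Fin (n + 1)) ι α :=
  Matrix.of fun i j => Fin.lastCases (f j) (fun k => R k j) i

variable [Fintype ι] [NonUnitalNonAssocSemiring α] (R : Matrix (Fin n) ι α) (f u : ι → α)

@[simp]
theorem snocRow_mulVec_castSucc (i : Fin n) : (snocRow R f *ᵥ u) i.castSucc = (R *ᵥ u) i := by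
  simp [snocRow, mulVec]

@[simp]
theorem snocRow_mulVec_last : (snocRow R f *ᵥ u) (Fin.last n) = f ⬝ᵥ u := by
  simp [snocRow, mulVec]

end SnocRow

theorem isUnit_det_snocRow {K : Type*} [Field K] {n : ℕ} {R : Matrix (Fin n) (Fin (n + 1)) K}
    {f : Fin (n + 1) → K} (h : ∀ u, R *ᵥ u = 0 → f ⬝ᵥ u = 0 → u = 0) :
    IsUnit (snocRow R f).det := by
  rw [isUnit_iff_ne_zero, Ne, ← exists_mulVec_eq_zero_iff]
  rintro ⟨u, hu0, hu⟩
  refine hu0 (h u (funext fun i => ?_) ?_)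
  · simpa using congrFun hu i.castSucc
  · simpa using congrFun hu (Fin.last n)

theorem exists_dotProduct_ne_zero {K ι n : Type*} [Field K] [Infinite K] [Finite ι] [Fintype n]
    [DecidableEq n] (v : ι → n → K) (hv : ∀ i, v i ≠ 0) :
    ∃ f : n → K, ∀ i, f ⬝ᵥ v i ≠ 0 := by
  obtain ⟨φ, hφ⟩ := Module.exists_dual_forall_apply_ne_zero (K := K) v hv
  refine ⟨(dotProductEquiv K n).symm φ, fun i => ?_⟩
  simpa [← dotProductEquiv_apply_apply] using hφ i

theorem hat_ne_zero {n : ℕ} (u : Fin n → ℝ) : hat u ≠ 0 := fun h => by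
  simpa [hat] using congrFun h (Fin.last n)

theorem exists_hat_eq_inv_smul {n : ℕ} {v : Fin (n + 1) → ℝ} (hv : v (Fin.last n) ≠ 0) :
    ∃ u : Fin n → ℝ, hat u = (v (Fin.last n))⁻¹ • v := by
  refine ⟨fun j => (v (Fin.last n))⁻¹ * v j.castSucc, funext fun j => ?_⟩
  refine Fin.lastCases ?_ (fun j => ?_) j <;> simp [hat, hv]

theorem SimEq.smul {n : ℕ} {u v : Fin n → ℝ} (h : SimEq u v) {s : ℝ} (hs : s ≠ 0) :
    SimEq (s • u) v := by
  obtain ⟨c, hc, rfl⟩ := h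
  exact ⟨s * c, mul_ne_zero hs hc, smul_smul s c v⟩

theorem Coincident.of_mul_right {P Q : Matrix (Fin 3) (Fin 4) ℝ} {M : Matrix (Fin 4) (Fin 4) ℝ}
    (h : Coincident (P * M) (Q * M)) (hM : IsUnit M.det) : Coincident P Q := by
  obtain ⟨c, hc, hP, hQ⟩ := h
  refine ⟨M *ᵥ c, ?_, by rwa [mulVec_mulVec], by rwa [mulVec_mulVec]⟩
  exact fun h0 => hc (mulVec_injective_iff_isUnit.mpr ((isUnit_iff_isUnit_det M).mpr hM)
    (by rw [h0, mulVec_zero]))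

theorem leftBlock_mulVec (P : Matrix (Fin 3) (Fin 4) ℝ) (v : Fin 3 → ℝ) :
    leftBlock P *ᵥ v = P *ᵥ Fin.snoc v 0 := by
  ext i
  simp only [leftBlock, mulVec, dotProduct, submatrix_apply, id_eq, Fin.sum_univ_castSucc,
    Fin.snoc_castSucc, Fin.snoc_last, mul_zero, add_zero]

theorem isFiniteCamera_iff {P : Matrix (Fin 3) (Fin 4) ℝ} :
    IsFiniteCamera P ↔ ∀ u, P *ᵥ u = 0 → u (Fin.last 3) = 0 → u = 0 := by
  rw [IsFiniteCamera, isUnit_iff_ne_zero, Ne, ← exists_mulVec_eq_zero_iff]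
  push Not
  refine ⟨fun h u hu hlast => ?_, fun h v hv0 hv => ?_⟩
  · have hinit : Fin.init u = 0 := by
      by_contra hne
      exact h _ hne (by rw [leftBlock_mulVec, ← hlast, Fin.snoc_init_self, hu])
    exact funext fun j => Fin.lastCases hlast (fun j => congrFun hinit j) j
  · have hsnoc := h _ (leftBlock_mulVec P v ▸ hv) (Fin.snoc_last _ _)
    exact hv0 (funext fun j => by simpa using congrFun hsnoc j.castSucc)

theorem leftBlock_cam (A : Matrix (Fin 3) (Fin 3) ℝ) (b : Fin 3 → ℝ) :
    leftBlock (cam A b) = A := by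
  ext i j
  simp [leftBlock, cam]

theorem isFiniteCamera_cam_one_zero : IsFiniteCamera (cam 1 0) := by
  simp [IsFiniteCamera, leftBlock_cam]

theorem isFiniteCamera_mul_inv {P : Matrix (Fin 3) (Fin 4) ℝ} {T : Matrix (Fin 4) (Fin 4) ℝ}
    (hT : IsUnit T.det) (h : ∀ u, P *ᵥ u = 0 → (T *ᵥ u) (Fin.last 3) = 0 → u = 0) :
    IsFiniteCamera (P * T⁻¹) := by
  refine isFiniteCamera_iff.mpr fun v hv hlast => ?_
  rw [← mulVec_mulVec] at hv
  have hTv : T *ᵥ (T⁻¹ *ᵥ v) = v := by rw [mulVec_mulVec, mul_nonsing_inv _ hT, one_mulVec]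
  calc v = T *ᵥ (T⁻¹ *ᵥ v) := hTv.symm
    _ = 0 := by rw [h _ hv (by rwa [hTv]), mulVec_zero]

theorem IsFiniteCamera.isCamera {P : Matrix (Fin 3) (Fin 4) ℝ} (h : IsFiniteCamera P) :
    IsCamera P := by
  refine le_antisymm P.rank_le_height ?_
  calc 3 = (leftBlock P).rank := by
        rw [rank_of_isUnit _ ((isUnit_iff_isUnit_det _).mpr h), Fintype.card_fin]
    _ ≤ P.rank := rank_submatrix_le P id Fin.castSucc

theorem IsCamera.exists_center {P : Matrix (Fin 3) (Fin 4) ℝ} (h : IsCamera P) :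
    ∃ c ≠ 0, ∀ u, P *ᵥ u = 0 → ∃ t : ℝ, u = t • c := by
  have hrank := P.mulVecLin.finrank_range_add_finrank_ker
  rw [show Module.finrank ℝ (LinearMap.range P.mulVecLin) = P.rank from rfl, h,
    Module.finrank_fin_fun] at hrank
  obtain ⟨c, hc, hspan⟩ :=
    finrank_eq_one_iff'.mp (show Module.finrank ℝ P.mulVecLin.ker = 1 by omega)
  refine ⟨c, fun h0 => hc (Subtype.ext h0), fun u hu => ?_⟩
  obtain ⟨t, ht⟩ := hspan ⟨u, hu⟩
  exact ⟨t, (congrArg Subtype.val ht).symm⟩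

theorem IsCamera.exists_center_eq_zero_of_dotProduct_eq_zero {P : Matrix (Fin 3) (Fin 4) ℝ}
    (h : IsCamera P) :
    ∃ c ≠ 0, ∀ f : Fin 4 → ℝ, f ⬝ᵥ c ≠ 0 → ∀ u, P *ᵥ u = 0 → f ⬝ᵥ u = 0 → u = 0 := by
  obtain ⟨c, hc, hker⟩ := h.exists_center
  refine ⟨c, hc, fun f hfc u hu hfu => ?_⟩
  obtain ⟨t, rfl⟩ := hker u hu
  rw [dotProduct_smul, smul_eq_mul, mul_eq_zero] at hfu
  rw [hfu.resolve_right hfc, zero_smul]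

theorem cam_one_zero_mul_snocRow (R : Matrix (Fin 3) (Fin 4) ℝ) (f : Fin 4 → ℝ) :
    cam 1 0 * snocRow R f = R := by
  ext i j
  simp [cam, snocRow, mul_apply, Fin.sum_univ_castSucc, one_apply, -Fin.reduceLast]

theorem exists_coordinate_change_isFiniteCamera {ι : Type*} [Finite ι]
    {P₁ P₂ : Matrix (Fin 3) (Fin 4) ℝ} (h₁ : IsCamera P₁) (h₂ : IsCamera P₂)
    {w : ι → Fin 4 → ℝ} (hw : ∀ i, w i ≠ 0) :
    ∃ T : Matrix (Fin 4) (Fin 4) ℝ, IsUnit T.det ∧ IsFiniteCamera (P₁ * T⁻¹) ∧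
      IsFiniteCamera (P₂ * T⁻¹) ∧ ∀ i, (T *ᵥ w i) (Fin.last 3) ≠ 0 := by
  obtain ⟨c₀, hc₀, hP₀⟩ :=
    isFiniteCamera_cam_one_zero.isCamera.exists_center_eq_zero_of_dotProduct_eq_zero
  obtain ⟨c₁, hc₁, hP₁⟩ := h₁.exists_center_eq_zero_of_dotProduct_eq_zero
  obtain ⟨c₂, hc₂, hP₂⟩ := h₂.exists_center_eq_zero_of_dotProduct_eq_zero
  obtain ⟨f, hf⟩ := exists_dotProduct_ne_zero (Sum.elim ![c₀, c₁, c₂] w) (by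
    rintro (i | i)
    · fin_cases i <;> assumption
    · exact hw i)
  -- `c₀` is the centre of `(I 0)`, so `f ⬝ᵥ c₀ ≠ 0` makes `(I 0)` stacked over `f` invertible.
  have hT := isUnit_det_snocRow (hP₀ f (hf (.inl 0)))
  refine ⟨snocRow (cam 1 0) f, hT, isFiniteCamera_mul_inv hT ?_, isFiniteCamera_mul_inv hT ?_,
    fun i => ?_⟩
  · exact fun u hu hfu => hP₁ f (hf (.inl 1)) u hu (by rwa [snocRow_mulVec_last] at hfu)
  · exact fun u hu hfu => hP₂ f (hf (.inl 2)) u hu (by rwa [snocRow_mulVec_last] at hfu)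
  · rw [snocRow_mulVec_last]
    exact hf (.inr i)

theorem exists_hat_reconstruction_mul_inv {T : Matrix (Fin 4) (Fin 4) ℝ} (hT : IsUnit T.det)
    {P₁ P₂ : Matrix (Fin 3) (Fin 4) ℝ} {w : Fin 4 → ℝ} {a b : Fin 3 → ℝ}
    (hw : (T *ᵥ w) (Fin.last 3) ≠ 0) (h₁ : SimEq (P₁ *ᵥ w) a) (h₂ : SimEq (P₂ *ᵥ w) b) :
    ∃ u, SimEq ((P₁ * T⁻¹) *ᵥ hat u) a ∧ SimEq ((P₂ * T⁻¹) *ᵥ hat u) b := by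
  obtain ⟨u, hu⟩ := exists_hat_eq_inv_smul hw
  have hmul (P : Matrix (Fin 3) (Fin 4) ℝ) :
      (P * T⁻¹) *ᵥ hat u = ((T *ᵥ w) (Fin.last 3))⁻¹ • P *ᵥ w := by
    rw [hu, mulVec_smul, mulVec_mulVec, nonsing_inv_mul_cancel_right _ _ hT]
  exact ⟨u, hmul P₁ ▸ h₁.smul (inv_ne_zero hw), hmul P₂ ▸ h₂.smul (inv_ne_zero hw)⟩

theorem exists_finite_reconstruction {ι : Type*} [Finite ι] {a b : ι → Fin 3 → ℝ}
    {P₁ P₂ : Matrix (Fin 3) (Fin 4) ℝ} (h₁ : IsCamera P₁) (h₂ : IsCamera P₂)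
    (hnc : ¬ Coincident P₁ P₂) {w : ι → Fin 4 → ℝ}
    (hw : ∀ i, w i ≠ 0 ∧ SimEq (P₁ *ᵥ w i) (a i) ∧ SimEq (P₂ *ᵥ w i) (b i)) :
    ∃ Q₁ Q₂ : Matrix (Fin 3) (Fin 4) ℝ, IsFiniteCamera Q₁ ∧ IsFiniteCamera Q₂ ∧
      ¬ Coincident Q₁ Q₂ ∧ ∃ u : ι → Fin 3 → ℝ, ∀ i,
        SimEq (Q₁ *ᵥ hat (u i)) (a i) ∧ SimEq (Q₂ *ᵥ hat (u i)) (b i) := by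
  obtain ⟨T, hT, hQ₁, hQ₂, hwT⟩ := exists_coordinate_change_isFiniteCamera h₁ h₂ fun i => (hw i).1
  choose u hu using fun i => exists_hat_reconstruction_mul_inv hT (hwT i) (hw i).2.1 (hw i).2.2
  exact ⟨_, _, hQ₁, hQ₂, fun h => hnc (h.of_mul_right (isUnit_nonsing_inv_det T hT)), u, hu⟩

theorem exists_normalized_reconstruction {ι : Type*} {a b : ι → Fin 3 → ℝ}
    {P₁ P₂ : Matrix (Fin 3) (Fin 4) ℝ} (h₁ : IsFiniteCamera P₁) (h₂ : IsFiniteCamera P₂)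
    (hnc : ¬ Coincident P₁ P₂) {w : ι → Fin 3 → ℝ}
    (hw : ∀ i, SimEq (P₁ *ᵥ hat (w i)) (a i) ∧ SimEq (P₂ *ᵥ hat (w i)) (b i)) :
    ∃ Q : Matrix (Fin 3) (Fin 4) ℝ, IsFiniteCamera Q ∧ ¬ Coincident (cam 1 0) Q ∧
      ∃ u : ι → Fin 3 → ℝ, ∀ i,
        SimEq (cam 1 0 *ᵥ hat (u i)) (a i) ∧ SimEq (Q *ᵥ hat (u i)) (b i) := by
  set T := snocRow P₁ (Pi.single (Fin.last 3) 1)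
  have hT : IsUnit T.det :=
    isUnit_det_snocRow fun u hu hlast => isFiniteCamera_iff.mp h₁ u hu (by simpa using hlast)
  have hcam : P₁ * T⁻¹ = cam 1 0 := by
    calc P₁ * T⁻¹ = cam 1 0 * T * T⁻¹ := by rw [cam_one_zero_mul_snocRow]
      _ = cam 1 0 := mul_nonsing_inv_cancel_right _ _ hT
  choose u hu using fun i =>
    exists_hat_reconstruction_mul_inv hT (by simp [T, hat, -Fin.reduceLast]) (hw i).1 (hw i).2
  refine ⟨P₂ * T⁻¹, isFiniteCamera_mul_inv hT fun v hv hlast => ?_, fun h => ?_, u, ?_⟩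
  · exact isFiniteCamera_iff.mp h₂ v hv (by simpa [T, -Fin.reduceLast] using hlast)
  · exact hnc ((hcam ▸ h).of_mul_right (isUnit_nonsing_inv_det T hT))
  · simpa only [hcam] using hu

/-- The four versions of the projective reconstruction problem with NON-COINCIDENT
cameras are equivalent. -/
theorem stmt4 (m : ℕ) (x y : Fin m → Fin 2 → ℝ) :
    List.TFAE
      [ (∃ P₁ P₂ : Matrix (Fin 3) (Fin 4) ℝ, IsCamera P₁ ∧ IsCamera P₂ ∧
          ¬ Coincident P₁ P₂ ∧
          ∃ w : Fin m → Fin 4 → ℝ, ∀ i, w i ≠ 0 ∧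
            SimEq (P₁.mulVec (w i)) (hat (x i)) ∧ SimEq (P₂.mulVec (w i)) (hat (y i))),
        (∃ P₁ P₂ : Matrix (Fin 3) (Fin 4) ℝ, IsFiniteCamera P₁ ∧ IsFiniteCamera P₂ ∧
          ¬ Coincident P₁ P₂ ∧
          ∃ w : Fin m → Fin 4 → ℝ, ∀ i, w i ≠ 0 ∧
            SimEq (P₁.mulVec (w i)) (hat (x i)) ∧ SimEq (P₂.mulVec (w i)) (hat (y i))),
        (∃ P₁ P₂ : Matrix (Fin 3) (Fin 4) ℝ, IsFiniteCamera P₁ ∧ IsFiniteCamera P₂ ∧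
          ¬ Coincident P₁ P₂ ∧
          ∃ w : Fin m → Fin 3 → ℝ, ∀ i,
            SimEq (P₁.mulVec (hat (w i))) (hat (x i)) ∧
            SimEq (P₂.mulVec (hat (w i))) (hat (y i))),
        (∃ P₂ : Matrix (Fin 3) (Fin 4) ℝ, IsFiniteCamera P₂ ∧
          ¬ Coincident (cam 1 0) P₂ ∧
          ∃ w : Fin m → Fin 3 → ℝ, ∀ i,
            SimEq ((cam 1 0).mulVec (hat (w i))) (hat (x i)) ∧
            SimEq (P₂.mulVec (hat (w i))) (hat (y i))) ] := by
  tfae_have 1 → 3 := fun ⟨P₁, P₂, h₁, h₂, hnc, w, hw⟩ => exists_finite_reconstruction h₁ h₂ hnc hw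
  tfae_have 3 → 4 := fun ⟨P₁, P₂, h₁, h₂, hnc, w, hw⟩ =>
    exists_normalized_reconstruction h₁ h₂ hnc hw
  tfae_have 4 → 3 := fun ⟨P₂, h₂, hnc, w, hw⟩ =>
    ⟨cam 1 0, P₂, isFiniteCamera_cam_one_zero, h₂, hnc, w, hw⟩
  tfae_have 3 → 2 := fun ⟨P₁, P₂, h₁, h₂, hnc, w, hw⟩ =>
    ⟨P₁, P₂, h₁, h₂, hnc, fun i => hat (w i), fun i => ⟨hat_ne_zero (w i), hw i⟩⟩
  tfae_have 2 → 1 := fun ⟨P₁, P₂, h₁, h₂, hnc, w, hw⟩ =>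
    ⟨P₁, P₂, h₁.isCamera, h₂.isCamera, hnc, w, hw⟩
  tfae_finish
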